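/- Fix W(s) = (s² − 1)²/4. Then k₁ ≤ 0.6846, where k₁ is the Rayleigh-quotient constant associated to W. In particular, for every h, L > 0 the quadratic polynomial u(x) = h² − (h²/L²)(x − L)² on [0, L] satisfies ∫_0^L W(u) dx = L(128h⁸ − 336h⁴ + 315)/1260, ∫_0^L (u'')² dx = 4h⁴/L³, ∫_0^L (u')² dx = 4h⁴/(3L), and there exist h, L > 0 for which the resulting Rayleigh quotient is at most 0.6846. -/

import Mathlib

/-!
Test the Rayleigh quotient on the odd extension to `[-L, L]` of the quadratic
`u(x) = h² - (h²/L²)(x - L)²` on `[0, L]`, which has `u(0) = 0` and `u'(L) = 0`.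
The extension is in `W^{2,2}` (only its second derivative jumps, at `0`), and `W(u)`, `(u'')²`,
`(u')²` are even, so its quotient over `[-L, L]` is `R_0^L(u)`. The three integrals over `[0, L]`
are polynomial in `h` and `L`, and `h = 28/25`, `L = 74/25` give `R_0^L(u) ≈ 0.68452`.
-/

open MeasureTheory intervalIntegral

/-- `u ∈ W^{2,2}(a,b)` with first derivative `u'` and second derivative `u''`. -/
def W22On (u u' u'' : ℝ → ℝ) (a b : ℝ) : Prop :=
  (∀ x ∈ Set.Icc a b, HasDerivWithinAt u (u' x) (Set.Icc a b) x) ∧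
  ContinuousOn u' (Set.Icc a b) ∧
  MeasureTheory.IntegrableOn u'' (Set.Icc a b) ∧
  MeasureTheory.IntegrableOn (fun x => (u'' x) ^ 2) (Set.Icc a b) ∧
  (∀ x ∈ Set.Icc a b, u' x = u' a + ∫ t in a..x, u'' t)

/-- The Rayleigh-quotient constant `k₁` associated to `W(s) = (s²−1)²/4`:
`k₁ = inf_{L>0} inf { R_{−L}^L(u) : u ∈ W^{2,2}(−L,L), u'(±L) = 0, u' ≢ 0 }`. -/
noncomputable def kOne : ℝ :=
  sInf {r : ℝ | ∃ L : ℝ, 0 < L ∧ ∃ u u' u'' : ℝ → ℝ,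
    W22On u u' u'' (-L) L ∧ u' (-L) = 0 ∧ u' L = 0 ∧
    (∃ x ∈ Set.Icc (-L) L, u' x ≠ 0) ∧
    r = (∫ x in (-L)..L, (((u x) ^ 2 - 1) ^ 2 / 4 + (u'' x) ^ 2)) /
        ∫ x in (-L)..L, (u' x) ^ 2}

open Set Filter Topology

lemma kOne_le_rayleigh {L : ℝ} (hL : 0 < L) {u u' u'' : ℝ → ℝ} (hu : W22On u u' u'' (-L) L)
    (hl : u' (-L) = 0) (hr : u' L = 0) (hne : ∃ x ∈ Icc (-L) L, u' x ≠ 0) :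
    kOne ≤ (∫ x in (-L)..L, (((u x) ^ 2 - 1) ^ 2 / 4 + (u'' x) ^ 2)) /
      ∫ x in (-L)..L, (u' x) ^ 2 := by
  refine csInf_le ⟨0, ?_⟩ ⟨L, hL, u, u', u'', hu, hl, hr, hne, rfl⟩
  rintro r ⟨L, hL, u, u', u'', -, -, -, -, rfl⟩
  exact div_nonneg (integral_nonneg (by linarith) fun x _ => by positivity)
    (integral_nonneg (by linarith) fun x _ => by positivity)

lemma integral_neg_self_eq_two_mul_of_even {f : ℝ → ℝ} (hf : Function.Even f) {L : ℝ}
    (hint : IntervalIntegrable f volume (-L) L) :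
    ∫ x in -L..L, f x = 2 * ∫ x in 0..L, f x := by
  have hleft : ∫ x in -L..0, f x = ∫ x in 0..L, f x := by
    simpa [hf _] using (integral_comp_neg (a := 0) (b := L) f).symm
  have h0 : (0 : ℝ) ∈ uIcc (-L) L := by
    rcases le_total 0 L with h | h <;> simp [h]
  rw [← integral_add_adjacent_intervals (b := 0)
    (hint.mono_set (uIcc_subset_uIcc_left h0)) (hint.mono_set (uIcc_subset_uIcc_right h0)), hleft]
  ring

lemma hasDerivAt_mul_abs (x : ℝ) : HasDerivAt (fun y : ℝ => y * |y|) (2 * |x|) x := by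
  rcases lt_trichotomy x 0 with hx | rfl | hx
  · refine ((hasDerivAt_id' x).mul (hasDerivAt_abs_neg hx)).congr_deriv ?_
    rw [abs_of_neg hx]; ring
  · rw [hasDerivAt_iff_tendsto_slope]
    have : Tendsto (fun y : ℝ => |y|) (𝓝[≠] 0) (𝓝 0) := by
      simpa using (continuous_abs.tendsto (0 : ℝ)).mono_left nhdsWithin_le_nhds
    refine (this.congr' ?_).trans (by simp)
    filter_upwards [self_mem_nhdsWithin] with y hy
    simp [slope_def_field, mul_div_cancel_left₀ _ (show y ≠ 0 from hy)]
  · refine ((hasDerivAt_id' x).mul (hasDerivAt_abs_pos hx)).congr_deriv ?_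
    rw [abs_of_pos hx]; ring

lemma hasDerivWithinAt_abs_Ioi (x : ℝ) :
    HasDerivWithinAt (|·|) (if x < 0 then -1 else 1) (Ioi x) x := by
  split_ifs with hx
  · exact (hasDerivAt_abs_neg hx).hasDerivWithinAt
  · push Not at hx
    exact (hasDerivWithinAt_id x _).congr (fun y hy => abs_of_nonneg (hx.trans hy.le))
      (abs_of_nonneg hx)

section OddQuadratic

variable (h L : ℝ)

/-- The odd extension of `x ↦ h² - (h²/L²)(x - L)²` from `[0, L]` to `ℝ`. Its derivative is
`oddQuad'`, and `oddQuad''` is the right derivative of `oddQuad'` (which has a corner at `0`). -/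
noncomputable def oddQuad (x : ℝ) : ℝ := h ^ 2 * (2 * x / L - x * |x| / L ^ 2)

noncomputable def oddQuad' (x : ℝ) : ℝ := 2 * h ^ 2 / L * (1 - |x| / L)

noncomputable def oddQuad'' (x : ℝ) : ℝ :=
  if x < 0 then 2 * h ^ 2 / L ^ 2 else -(2 * h ^ 2 / L ^ 2)

lemma oddQuad_neg (x : ℝ) : oddQuad h L (-x) = -oddQuad h L x := by
  simp only [oddQuad, abs_neg]; ring

lemma oddQuad'_neg (x : ℝ) : oddQuad' h L (-x) = oddQuad' h L x := by
  simp only [oddQuad', abs_neg]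

lemma oddQuad''_sq (x : ℝ) : oddQuad'' h L x ^ 2 = (2 * h ^ 2 / L ^ 2) ^ 2 := by
  unfold oddQuad''; split_ifs <;> ring

@[fun_prop]
lemma continuous_oddQuad : Continuous (oddQuad h L) := by unfold oddQuad; fun_prop

@[fun_prop]
lemma continuous_oddQuad' : Continuous (oddQuad' h L) := by unfold oddQuad'; fun_prop

lemma antitone_oddQuad'' : Antitone (oddQuad'' h L) := by
  intro x y hxy
  have : 0 ≤ 2 * h ^ 2 / L ^ 2 := by positivity
  unfold oddQuad''
  split_ifs <;> linarith

lemma hasDerivAt_oddQuad (x : ℝ) : HasDerivAt (oddQuad h L) (oddQuad' h L x) x := by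
  have := (((hasDerivAt_id' x).const_mul 2).div_const L).sub
    ((hasDerivAt_mul_abs x).div_const (L ^ 2))
  refine (this.const_mul (h ^ 2)).congr_deriv ?_
  unfold oddQuad'; ring

lemma hasDerivWithinAt_oddQuad' (x : ℝ) :
    HasDerivWithinAt (oddQuad' h L) (oddQuad'' h L x) (Ioi x) x := by
  refine ((((hasDerivWithinAt_abs_Ioi x).div_const L).const_sub 1).const_mul
    (2 * h ^ 2 / L)).congr_deriv ?_
  unfold oddQuad''; split_ifs <;> ring

lemma w22On_oddQuad (a b : ℝ) : W22On (oddQuad h L) (oddQuad' h L) (oddQuad'' h L) a b := by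
  refine ⟨fun x _ => (hasDerivAt_oddQuad h L x).hasDerivWithinAt,
    (continuous_oddQuad' h L).continuousOn,
    (antitone_oddQuad'' h L).antitoneOn _ |>.integrableOn_isCompact isCompact_Icc, ?_,
    fun x hx => ?_⟩
  · simp_rw [oddQuad''_sq]
    exact integrableOn_const measure_Icc_lt_top.ne
  · rw [integral_eq_sub_of_hasDeriv_right_of_le hx.1 (continuous_oddQuad' h L).continuousOn
      (fun t _ => hasDerivWithinAt_oddQuad' h L t) (antitone_oddQuad'' h L).intervalIntegrable]
    ring

variable {h L} in
lemma rayleigh_oddQuad (hL : 0 < L) :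
    (∫ x in (-L)..L, ((oddQuad h L x ^ 2 - 1) ^ 2 / 4 + oddQuad'' h L x ^ 2)) /
        ∫ x in (-L)..L, oddQuad' h L x ^ 2 =
      ((∫ x in (0 : ℝ)..L, ((h ^ 2 - h ^ 2 / L ^ 2 * (x - L) ^ 2) ^ 2 - 1) ^ 2 / 4) +
          ∫ _ in (0 : ℝ)..L, (-(2 * h ^ 2 / L ^ 2)) ^ 2) /
        ∫ x in (0 : ℝ)..L, (-(2 * h ^ 2 / L ^ 2) * (x - L)) ^ 2 := by
  have integral_congr_of_nonneg {f g : ℝ → ℝ} (hfg : ∀ x, 0 ≤ x → f x = g x) :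
      ∫ x in 0..L, f x = ∫ x in 0..L, g x :=
    integral_congr fun x hx => hfg x (by rw [uIcc_of_le hL.le] at hx; exact hx.1)
  have hnum : ∫ x in (-L)..L, ((oddQuad h L x ^ 2 - 1) ^ 2 / 4 + oddQuad'' h L x ^ 2) =
      2 * ((∫ x in (0 : ℝ)..L, ((h ^ 2 - h ^ 2 / L ^ 2 * (x - L) ^ 2) ^ 2 - 1) ^ 2 / 4) +
        ∫ _ in (0 : ℝ)..L, (-(2 * h ^ 2 / L ^ 2)) ^ 2) := by
    simp_rw [oddQuad''_sq]
    rw [integral_neg_self_eq_two_mul_of_even ?even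
      ((by fun_prop : Continuous _).intervalIntegrable _ _),
      ← integral_add ((by fun_prop : Continuous _).intervalIntegrable _ _)
        intervalIntegrable_const]
    case even => intro x; simp only [oddQuad_neg]; ring
    refine congrArg _ (integral_congr_of_nonneg fun x hx => ?_)
    rw [oddQuad, abs_of_nonneg hx]
    field_simp
    ring
  have hden : ∫ x in (-L)..L, oddQuad' h L x ^ 2 =
      2 * ∫ x in (0 : ℝ)..L, (-(2 * h ^ 2 / L ^ 2) * (x - L)) ^ 2 := by
    rw [integral_neg_self_eq_two_mul_of_even ?even
      ((by fun_prop : Continuous _).intervalIntegrable _ _)]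
    case even => intro x; simp only [oddQuad'_neg]
    refine congrArg _ (integral_congr_of_nonneg fun x hx => ?_)
    rw [oddQuad', abs_of_nonneg hx]
    field_simp
    ring
  rw [hnum, hden, mul_div_mul_left _ _ two_ne_zero]

end OddQuadratic

section QuadraticIntegrals

variable {h L : ℝ}

lemma integral_W_quadratic (hL : L ≠ 0) :
    ∫ x in (0 : ℝ)..L, ((h ^ 2 - h ^ 2 / L ^ 2 * (x - L) ^ 2) ^ 2 - 1) ^ 2 / 4 =
      L * (128 * h ^ 8 - 336 * h ^ 4 + 315) / 1260 := by
  rw [integral_comp_sub_right (fun s => ((h ^ 2 - h ^ 2 / L ^ 2 * s ^ 2) ^ 2 - 1) ^ 2 / 4)]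
  have hexpand : (fun s : ℝ => ((h ^ 2 - h ^ 2 / L ^ 2 * s ^ 2) ^ 2 - 1) ^ 2 / 4) = fun s =>
      (h ^ 4 - 1) ^ 2 / 4 - (h ^ 4 - 1) * h ^ 4 / L ^ 2 * s ^ 2
        + (6 * h ^ 4 - 2) * h ^ 4 / (4 * L ^ 4) * s ^ 4 - h ^ 8 / L ^ 6 * s ^ 6
        + h ^ 8 / (4 * L ^ 8) * s ^ 8 := by
    funext s; field_simp; ring
  rw [hexpand]
  simp (disch := exact Continuous.intervalIntegrable (by fun_prop) _ _) only [
    intervalIntegral.integral_add, intervalIntegral.integral_sub,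
    intervalIntegral.integral_const_mul, intervalIntegral.integral_const, integral_pow]
  field_simp
  ring

lemma integral_sq_secondDeriv_quadratic (hL : L ≠ 0) :
    ∫ _ in (0 : ℝ)..L, (-(2 * h ^ 2 / L ^ 2)) ^ 2 = 4 * h ^ 4 / L ^ 3 := by
  rw [intervalIntegral.integral_const, smul_eq_mul]
  field_simp
  ring

lemma integral_sq_deriv_quadratic (hL : L ≠ 0) :
    ∫ x in (0 : ℝ)..L, (-(2 * h ^ 2 / L ^ 2) * (x - L)) ^ 2 = 4 * h ^ 4 / (3 * L) := by
  rw [integral_comp_sub_right (fun s => (-(2 * h ^ 2 / L ^ 2) * s) ^ 2)]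
  simp only [mul_pow, intervalIntegral.integral_const_mul, integral_pow]
  field_simp
  ring

lemma kOne_le_rayleigh_quadratic (hh : h ≠ 0) (hL : 0 < L) :
    kOne ≤ (L * (128 * h ^ 8 - 336 * h ^ 4 + 315) / 1260 + 4 * h ^ 4 / L ^ 3) /
      (4 * h ^ 4 / (3 * L)) := by
  have hne : oddQuad' h L 0 ≠ 0 := by simp [oddQuad', hh, hL.ne']
  calc kOne ≤ _ :=
        kOne_le_rayleigh hL (w22On_oddQuad h L _ _) ?_ ?_ ⟨0, ⟨by linarith, hL.le⟩, hne⟩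
    _ = _ := by
      rw [rayleigh_oddQuad hL, integral_W_quadratic hL.ne',
        integral_sq_secondDeriv_quadratic hL.ne', integral_sq_deriv_quadratic hL.ne']
  all_goals simp [oddQuad', abs_of_pos hL, hL.ne']

end QuadraticIntegrals

/-- Upper bound on the Rayleigh-quotient constant: `k₁ ≤ 0.6846`.  Moreover, for every
`h, L > 0` the quadratic polynomial `u(x) = h² − (h²/L²)(x−L)²` on `[0,L]` (whose
derivatives are `u'(x) = −(2h²/L²)(x−L)` and `u'' ≡ −2h²/L²`) satisfies
`I₁ = ∫_0^L W(u) = L(128h⁸ − 336h⁴ + 315)/1260`, `I₂ = ∫_0^L (u'')² = 4h⁴/L³`,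
`I₃ = ∫_0^L (u')² = 4h⁴/(3L)`, and there are `h, L > 0` with
`(I₁ + I₂)/I₃ ≤ 0.6846`. -/
theorem kOne_le_estimate :
    kOne ≤ 0.6846 ∧
    (∀ h L : ℝ, 0 < h → 0 < L →
      (∫ x in (0 : ℝ)..L,
          ((h ^ 2 - h ^ 2 / L ^ 2 * (x - L) ^ 2) ^ 2 - 1) ^ 2 / 4) =
        L * (128 * h ^ 8 - 336 * h ^ 4 + 315) / 1260 ∧
      (∫ x in (0 : ℝ)..L, (-(2 * h ^ 2 / L ^ 2)) ^ 2) = 4 * h ^ 4 / L ^ 3 ∧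
      (∫ x in (0 : ℝ)..L, (-(2 * h ^ 2 / L ^ 2) * (x - L)) ^ 2) =
        4 * h ^ 4 / (3 * L)) ∧
    ∃ h L : ℝ, 0 < h ∧ 0 < L ∧
      (L * (128 * h ^ 8 - 336 * h ^ 4 + 315) / 1260 + 4 * h ^ 4 / L ^ 3) /
          (4 * h ^ 4 / (3 * L)) ≤ 0.6846 := by
  have hratio : ((74 / 25) * (128 * (28 / 25) ^ 8 - 336 * (28 / 25) ^ 4 + 315) / 1260 +
      4 * (28 / 25) ^ 4 / (74 / 25) ^ 3) / (4 * (28 / 25) ^ 4 / (3 * (74 / 25))) ≤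
        (0.6846 : ℝ) := by
    norm_num
  refine ⟨(kOne_le_rayleigh_quadratic (by norm_num) (by norm_num)).trans hratio,
    fun h L _ hL => ⟨integral_W_quadratic hL.ne', integral_sq_secondDeriv_quadratic hL.ne',
      integral_sq_deriv_quadratic hL.ne'⟩,
    28 / 25, 74 / 25, by norm_num, by norm_num, hratio⟩
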